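/- Shifting one point's assignment between two clusters a and b by α ∈ (0,1], where the point x_g satisfies D(x_g, c_a) = D(x_g, c_b) but x_g ≠ c_a and x_g ≠ c_b, strictly decreases the clustering loss: F(P^new) − F(P) = −((s_a − α w_g) D(c'_a, c_a) + (s_b + α w_g) D(c'_b, c_b)) < 0, since the new centers c'_a ≠ c_a and c'_b ≠ c_b. -/

import Mathlib

/-!
Moving the mass `β = α w_g` of `x_g` from cluster `a` to cluster `b` while keeping the old centers
changes the loss by
`β (D(x_g, c_b) - D(x_g, c_a))`, which vanishes at a tie. Re-centering the two clusters then lowers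
the loss by `s'_a D(c'_a, c_a) + s'_b D(c'_b, c_b)`: for the weighted mean `c` of the `x_i`,
`∑ q_i D(x_i, y) = ∑ q_i D(x_i, c) + (∑ q_i) D(c, y)`, because `D(·, y) - D(·, c)` is affine.
The new centers differ from the old ones since `x_g` does, and a Bregman divergence of a strictly
convex function is positive off the diagonal.
-/

open Finset

section

variable {ι κ E : Type*} [Fintype ι] [NormedAddCommGroup E] [NormedSpace ℝ E]

theorem StrictConvexOn.comp_lineMap {s : Set E} {φ : E → ℝ} (hφ : StrictConvexOn ℝ s φ)
    {u v : E} (hu : u ∈ s) (hv : v ∈ s) (huv : u ≠ v) :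
    StrictConvexOn ℝ (Set.Icc 0 1) (φ ∘ AffineMap.lineMap (k := ℝ) v u) := by
  refine ⟨convex_Icc 0 1, fun t ht t' ht' htt' a b ha hb hab => ?_⟩
  rw [Function.comp_apply, Convex.combo_affine_apply hab]
  exact hφ.2 (hφ.1.lineMap_mem hv hu ht) (hφ.1.lineMap_mem hv hu ht')
    ((AffineMap.lineMap_injective ℝ huv.symm).ne htt') ha hb hab

theorem StrictConvexOn.apply_sub_lt_of_hasFDerivAt {s : Set E} {φ : E → ℝ}
    (hφ : StrictConvexOn ℝ s φ) {u v : E} {L : E →L[ℝ] ℝ} (hL : HasFDerivAt φ L v)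
    (hu : u ∈ s) (hv : v ∈ s) (huv : u ≠ v) :
    L (u - v) < φ u - φ v := by
  have hline : HasDerivAt (φ ∘ AffineMap.lineMap (k := ℝ) v u) (L (u - v)) 0 :=
    hL.comp_hasDerivAt_of_eq 0 AffineMap.hasDerivAt_lineMap (by simp)
  simpa [slope_def_field] using
    (hφ.comp_lineMap hu hv huv).lt_slope_of_hasDerivAt (by simp) (by simp) zero_lt_one hline

def bregmanDiv (φ : E → ℝ) (L : E → E →L[ℝ] ℝ) (x y : E) : ℝ :=
  φ x - φ y - L y (x - y)

theorem bregmanDiv_pos {s : Set E} {φ : E → ℝ} (hφ : StrictConvexOn ℝ s φ)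
    {L : E → E →L[ℝ] ℝ} {x y : E} (hL : HasFDerivAt φ (L y) y) (hx : x ∈ s) (hy : y ∈ s)
    (hxy : x ≠ y) : 0 < bregmanDiv φ L x y :=
  sub_pos.2 (hφ.apply_sub_lt_of_hasFDerivAt hL hx hy hxy)

theorem sum_smul_centerMass {q : ι → ℝ} (hq : ∑ i, q i ≠ 0) (x : ι → E) :
    (∑ i, q i) • univ.centerMass q x = ∑ i, q i • x i := by
  rw [Finset.centerMass, smul_smul, mul_inv_cancel₀ hq, one_smul]

theorem sum_mul_apply_sub_eq (L : E →L[ℝ] ℝ) {q : ι → ℝ} (hq : ∑ i, q i ≠ 0) (x : ι → E)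
    (z : E) : ∑ i, q i * L (x i - z) = (∑ i, q i) * L (univ.centerMass q x - z) :=
  calc ∑ i, q i * L (x i - z) = L (∑ i, q i • (x i - z)) := by simp [map_sum]
    _ = L ((∑ i, q i) • (univ.centerMass q x - z)) := by
      simp only [smul_sub, sum_sub_distrib, sum_smul_centerMass hq, sum_smul]
    _ = (∑ i, q i) * L (univ.centerMass q x - z) := by rw [map_smul, smul_eq_mul]

theorem sum_mul_bregmanDiv_eq_add (φ : E → ℝ) (L : E → E →L[ℝ] ℝ) {q : ι → ℝ}
    (hq : ∑ i, q i ≠ 0) (x : ι → E) (y : E) :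
    ∑ i, q i * bregmanDiv φ L (x i) y =
      ∑ i, q i * bregmanDiv φ L (x i) (univ.centerMass q x) +
        (∑ i, q i) * bregmanDiv φ L (univ.centerMass q x) y := by
  simp only [bregmanDiv, mul_sub, sum_sub_distrib, ← sum_mul, sum_mul_apply_sub_eq _ hq,
    sub_self, map_zero]
  ring

variable [DecidableEq ι]

theorem sum_mul_bregmanDiv_centerMass_sub (φ : E → ℝ) (L : E → E →L[ℝ] ℝ)
    (x : ι → E) {q q' : ι → ℝ} {g : ι} {β : ℝ} (hq' : q' = q + Pi.single g β)
    (hS' : ∑ i, q' i ≠ 0) :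
    ∑ i, q' i * bregmanDiv φ L (x i) (univ.centerMass q' x) -
        ∑ i, q i * bregmanDiv φ L (x i) (univ.centerMass q x) =
      β * bregmanDiv φ L (x g) (univ.centerMass q x) -
        (∑ i, q' i) * bregmanDiv φ L (univ.centerMass q' x) (univ.centerMass q x) := by
  have hsplit := sum_mul_bregmanDiv_eq_add φ L hS' x (univ.centerMass q x)
  have hshift : ∑ i, q' i * bregmanDiv φ L (x i) (univ.centerMass q x) =
      ∑ i, q i * bregmanDiv φ L (x i) (univ.centerMass q x) +
        β * bregmanDiv φ L (x g) (univ.centerMass q x) := by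
    simp [hq', add_mul, sum_add_distrib, Pi.single_apply]
  linarith

theorem centerMass_ne_of_add_single {x : ι → E} {q q' : ι → ℝ} {g : ι} {β : ℝ}
    (hq' : q' = q + Pi.single g β) (hS : ∑ i, q i ≠ 0) (hS' : ∑ i, q' i ≠ 0) (hβ : β ≠ 0)
    (hg : x g ≠ univ.centerMass q x) :
    univ.centerMass q' x ≠ univ.centerMass q x := by
  subst hq'
  intro h
  have e' := sum_smul_centerMass hS' x
  rw [h] at e'
  simp only [Pi.add_apply, sum_add_distrib, add_smul, Pi.single_apply, ite_smul,
    zero_smul, sum_ite_eq', mem_univ, if_true] at e'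
  have e := sum_smul_centerMass hS x
  have : β • univ.centerMass q x = β • x g := by
    linear_combination (norm := module) e' - e
  exact hg (smul_right_injective E hβ this).symm

theorem bregmanDiv_centerMass_add_single_pos {s : Set E} {φ : E → ℝ}
    (hφ : StrictConvexOn ℝ s φ) {L : E → E →L[ℝ] ℝ} {x : ι → E} {q q' : ι → ℝ} {g : ι}
    {β : ℝ} (hq' : q' = q + Pi.single g β) (hS : ∑ i, q i ≠ 0) (hS' : ∑ i, q' i ≠ 0)
    (hβ : β ≠ 0) (hg : x g ≠ univ.centerMass q x)
    (hL : HasFDerivAt φ (L (univ.centerMass q x)) (univ.centerMass q x))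
    (hc : univ.centerMass q x ∈ s) (hc' : univ.centerMass q' x ∈ s) :
    0 < bregmanDiv φ L (univ.centerMass q' x) (univ.centerMass q x) :=
  bregmanDiv_pos hφ hL hc' hc (centerMass_ne_of_add_single hq' hS hS' hβ hg)

noncomputable def clusterLoss [Fintype κ] (B : E → E → ℝ) (x : ι → E) (u : κ → ι → ℝ) : ℝ :=
  ∑ k, ∑ i, u k i * B (x i) (univ.centerMass (u k) x)

theorem clusterLoss_transfer [Fintype κ] (φ : E → ℝ) (L : E → E →L[ℝ] ℝ)
    (x : ι → E) {u u' : κ → ι → ℝ} {a b : κ} (hab : a ≠ b) {g : ι} {β : ℝ}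
    (ha : u' a = u a + Pi.single g (-β)) (hb : u' b = u b + Pi.single g β)
    (hrest : ∀ k, k ≠ a → k ≠ b → u' k = u k)
    (hSa : ∑ i, u' a i ≠ 0) (hSb : ∑ i, u' b i ≠ 0) :
    clusterLoss (bregmanDiv φ L) x u' - clusterLoss (bregmanDiv φ L) x u =
      β * (bregmanDiv φ L (x g) (univ.centerMass (u b) x) -
          bregmanDiv φ L (x g) (univ.centerMass (u a) x)) -
        ((∑ i, u' a i) * bregmanDiv φ L (univ.centerMass (u' a) x) (univ.centerMass (u a) x) +
          (∑ i, u' b i) * bregmanDiv φ L (univ.centerMass (u' b) x) (univ.centerMass (u b) x)) := by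
  rw [clusterLoss, clusterLoss, ← sum_sub_distrib,
    Fintype.sum_eq_add a b hab fun k hk => by rw [hrest k hk.1 hk.2, sub_self],
    sum_mul_bregmanDiv_centerMass_sub φ L x ha hSa,
    sum_mul_bregmanDiv_centerMass_sub φ L x hb hSb]
  ring

end

theorem tie_shift_strictly_decreases_general {d K N : ℕ}
    (dom : Set (Fin d → ℝ))
    (φ : (Fin d → ℝ) → ℝ) (hφ : StrictConvexOn ℝ dom φ)
    (f' : (Fin d → ℝ) → (Fin d → ℝ) →L[ℝ] ℝ)
    (hdiff : ∀ y ∈ interior dom, HasFDerivAt φ (f' y) y)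
    (D : (Fin d → ℝ) → (Fin d → ℝ) → ℝ)
    (hD : ∀ x y, D x y = φ x - φ y - f' y (x - y))
    (x : Fin N → (Fin d → ℝ))
    (w : Fin N → ℝ) (hw : ∀ n, 0 < w n)
    (P : Fin K → Fin N → ℝ)
    (g : Fin N) (a b : Fin K) (hab : a ≠ b)
    (α : ℝ) (hα0 : 0 < α)
    (Pnew : Fin K → Fin N → ℝ)
    (hPnew : ∀ k n, Pnew k n =
      if k = a ∧ n = g then P k n - α
      else if k = b ∧ n = g then P k n + α
      else P k n)
    (s : (Fin K → Fin N → ℝ) → Fin K → ℝ)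
    (hs : ∀ Q k, s Q k = ∑ n, Q k n * w n)
    (cstar : (Fin K → Fin N → ℝ) → Fin K → (Fin d → ℝ))
    (hcstar : ∀ Q k, cstar Q k = (s Q k)⁻¹ • ∑ n, (Q k n * w n) • x n)
    (F : (Fin K → Fin N → ℝ) → ℝ)
    (hF : ∀ Q, F Q = ∑ k, ∑ n, Q k n * w n * D (x n) (cstar Q k))
    (hpos : ∀ k, 0 < s P k) (hposa : 0 < s P a - α * w g)
    (hmeans : ∀ k, cstar P k ∈ interior dom ∧ cstar Pnew k ∈ interior dom)
    (htie : D (x g) (cstar P a) = D (x g) (cstar P b))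
    (hga : x g ≠ cstar P a) (hgb : x g ≠ cstar P b) :
    F Pnew - F P =
      -((s P a - α * w g) * D (cstar Pnew a) (cstar P a)
        + (s P b + α * w g) * D (cstar Pnew b) (cstar P b)) ∧
    F Pnew < F P := by
  obtain rfl : D = bregmanDiv φ f' := funext₂ hD
  obtain rfl : s = fun Q k => ∑ n, Q k n * w n := funext₂ hs
  obtain rfl : cstar = fun Q k => univ.centerMass (fun n => Q k n * w n) x := funext₂ hcstar
  obtain rfl : F = fun Q => clusterLoss (bregmanDiv φ f') x fun k n => Q k n * w n := funext hF
  beta_reduce at *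
  have hβ : 0 < α * w g := mul_pos hα0 (hw g)
  have hbpos : 0 < ∑ n, P b n * w n + α * w g := add_pos (hpos b) hβ
  have ha : (fun n => Pnew a n * w n) = (fun n => P a n * w n) + Pi.single g (-(α * w g)) := by
    funext n; by_cases h : n = g <;> simp [hPnew, h]; ring
  have hb : (fun n => Pnew b n * w n) = (fun n => P b n * w n) + Pi.single g (α * w g) := by
    funext n; by_cases h : n = g <;> simp [hPnew, h, hab.symm]; ring
  have hrest : ∀ k, k ≠ a → k ≠ b → (fun n => Pnew k n * w n) = fun n => P k n * w n :=
    fun k hka hkb => funext fun n => by simp [hPnew, hka, hkb]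
  have hSa : ∑ n, Pnew a n * w n = ∑ n, P a n * w n - α * w g := by
    rw [ha]; simp [sum_add_distrib, sub_eq_add_neg]
  have hSb : ∑ n, Pnew b n * w n = ∑ n, P b n * w n + α * w g := by
    rw [hb]; simp [sum_add_distrib]
  have hDa := bregmanDiv_centerMass_add_single_pos hφ ha (hpos a).ne' (hSa ▸ hposa.ne')
    (neg_ne_zero.2 hβ.ne') hga (hdiff _ (hmeans a).1) (interior_subset (hmeans a).1)
    (interior_subset (hmeans a).2)
  have hDb := bregmanDiv_centerMass_add_single_pos hφ hb (hpos b).ne' (hSb ▸ hbpos.ne')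
    hβ.ne' hgb (hdiff _ (hmeans b).1) (interior_subset (hmeans b).1)
    (interior_subset (hmeans b).2)
  have hshift := clusterLoss_transfer φ f' x (u := fun k n => P k n * w n) hab ha hb hrest
    (hSa ▸ hposa.ne') (hSb ▸ hbpos.ne')
  beta_reduce at hshift
  rw [hSa, hSb, htie, sub_self, mul_zero, zero_sub] at hshift
  exact ⟨hshift, sub_neg.1 (hshift ▸ neg_neg_of_pos
    (add_pos (mul_pos hposa hDa) (mul_pos hbpos hDb)))⟩

/-- Shifting a point `x g` between clusters `a` and `b` by `α ∈ (0,1]`,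
when `D(x_g, c_a) = D(x_g, c_b)` but `x_g ≠ c_a` and `x_g ≠ c_b`, strictly decreases
the clustering loss:
`F(P^new) − F(P) = −((s_a − α w_g) D(c'_a, c_a) + (s_b + α w_g) D(c'_b, c_b)) < 0`. -/
theorem tie_shift_strictly_decreases {d K N : ℕ}
    (dom : Set (Fin d → ℝ)) (hdom : Convex ℝ dom)
    (φ : (Fin d → ℝ) → ℝ) (hφ : StrictConvexOn ℝ dom φ)
    (f' : (Fin d → ℝ) → (Fin d → ℝ) →L[ℝ] ℝ)
    (hdiff : ∀ y ∈ interior dom, HasFDerivAt φ (f' y) y)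
    (D : (Fin d → ℝ) → (Fin d → ℝ) → ℝ)
    (hD : ∀ x y, D x y = φ x - φ y - f' y (x - y))
    (x : Fin N → (Fin d → ℝ)) (hx : ∀ n, x n ∈ interior dom)
    (w : Fin N → ℝ) (hw : ∀ n, 0 < w n)
    (P : Fin K → Fin N → ℝ) (hP : ∀ k n, 0 ≤ P k n)
    (g : Fin N) (a b : Fin K) (hab : a ≠ b)
    (α : ℝ) (hα0 : 0 < α) (hα1 : α ≤ 1) (hαg : α ≤ P a g)
    (Pnew : Fin K → Fin N → ℝ)
    (hPnew : ∀ k n, Pnew k n =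
      if k = a ∧ n = g then P k n - α
      else if k = b ∧ n = g then P k n + α
      else P k n)
    (s : (Fin K → Fin N → ℝ) → Fin K → ℝ)
    (hs : ∀ Q k, s Q k = ∑ n, Q k n * w n)
    (cstar : (Fin K → Fin N → ℝ) → Fin K → (Fin d → ℝ))
    (hcstar : ∀ Q k, cstar Q k = (s Q k)⁻¹ • ∑ n, (Q k n * w n) • x n)
    (F : (Fin K → Fin N → ℝ) → ℝ)
    (hF : ∀ Q, F Q = ∑ k, ∑ n, Q k n * w n * D (x n) (cstar Q k))
    (hpos : ∀ k, 0 < s P k) (hposa : 0 < s P a - α * w g)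
    (hmeans : ∀ k, cstar P k ∈ interior dom ∧ cstar Pnew k ∈ interior dom)
    (htie : D (x g) (cstar P a) = D (x g) (cstar P b))
    (hga : x g ≠ cstar P a) (hgb : x g ≠ cstar P b) :
    F Pnew - F P =
      -((s P a - α * w g) * D (cstar Pnew a) (cstar P a)
        + (s P b + α * w g) * D (cstar Pnew b) (cstar P b)) ∧
    F Pnew < F P :=
  tie_shift_strictly_decreases_general dom φ hφ f' hdiff D hD x w hw P g a b hab α hα0 Pnew hPnew s
    hs cstar hcstar F hF hpos hposa hmeans htie hga hgb
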